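/- Let (X,T) be minimal. If the proximal relation coincides with the equicontinuous structure relation (i.e., coincidence rank 1), then the restriction of the induced map π_*: eE(X)e → E(X_max) to the structure group is injective, hence a group isomorphism onto E(X_max). -/

import Mathlib

/-- The Ellis semigroup of the action. -/
def Ellis (T : Type*) (X : Type*) [TopologicalSpace X] [SMul T X] : Set (X → X) :=
  closure (Set.range fun t : T => fun x : X => t • x)

/-- A two-sided ideal of a sub-semigroup `E` of `X → X` under composition. -/
def IsIdealIn {X : Type*} (E I : Set (X → X)) : Prop :=
  I ⊆ E ∧ I.Nonempty ∧ ∀ f ∈ E, ∀ g ∈ I, f ∘ g ∈ I ∧ g ∘ f ∈ I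

/-- A minimal idempotent of `E`: an idempotent belonging to every two-sided ideal. -/
def IsMinIdem {X : Type*} (E : Set (X → X)) (p : X → X) : Prop :=
  p ∈ E ∧ p ∘ p = p ∧ ∀ I : Set (X → X), IsIdealIn E I → p ∈ I

/-- The proximal relation. -/
def Proximal (T : Type*) {X : Type*} [MetricSpace X] [SMul T X] (x y : X) : Prop :=
  ∀ ε > 0, ∃ t : T, dist (t • x) (t • y) < ε

/-!
Every `f ∈ E(X)` is a limit of translations along which the translations of `Y` converge to some
`g ∈ E(Y)`, and then `π ∘ f = g ∘ π`; as `π` is onto, `g = π_* f` is determined by `f`, so `π_*` is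
multiplicative, and the symmetric argument makes it onto `E(Y)`. The points `x` and `e x` are
proximal, and proximal points have the same image in an equicontinuous factor, so `π_* e = id` and
`π_*` maps `eE(X)e` onto `E(Y)`. If `π_* f₁ = π_* f₂` for `f₁, f₂ ∈ eE(X)e`, then `f₁ x` and `f₂ x`
lie in one fibre, hence are proximal, hence identified by some `r ∈ E(X)`. Since `e` lies in the
minimal ideal, `e = h ∘ r ∘ e` for some `h ∈ E(X)`, and `e` fixes `f₁ x` and `f₂ x`, so they are
equal.
-/

open Filter Topology Set Function Uniformity

section Ellis

variable {T X : Type*} [TopologicalSpace X]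

lemma smul_mem_ellis [SMul T X] (t : T) : (fun x : X => t • x) ∈ Ellis T X :=
  subset_closure ⟨t, rfl⟩

lemma comp_mem_ellis [Monoid T] [MulAction T X] (hX : ∀ t : T, Continuous fun x : X => t • x)
    {f g : X → X} (hf : f ∈ Ellis T X) (hg : g ∈ Ellis T X) : f ∘ g ∈ Ellis T X := by
  have hleft (t : T) : (fun x => t • g x) ∈ Ellis T X :=
    map_mem_closure (continuous_pi fun x => (hX t).comp (continuous_apply x)) hg <| by
      rintro _ ⟨s, rfl⟩
      exact ⟨t * s, funext fun x => mul_smul t s x⟩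
  refine isClosed_closure.closure_subset (map_mem_closure (f := (· ∘ g))
    (continuous_pi fun x => continuous_apply (g x)) hf ?_)
  rintro _ ⟨t, rfl⟩
  exact hleft t

end Ellis

section Proximal

variable {T X : Type*} [MetricSpace X]

lemma proximal_of_apply_eq [SMul T X] {r : X → X} (hr : r ∈ Ellis T X) {x y : X}
    (hxy : r x = r y) : Proximal T x y := by
  intro ε hε
  have hU : IsOpen {h : X → X | dist (h x) (h y) < ε} := isOpen_lt (by fun_prop) (by fun_prop)
  obtain ⟨_, hlt, t, rfl⟩ := mem_closure_iff.mp hr _ hU (by simpa [hxy] using hε)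
  exact ⟨t, hlt⟩

lemma exists_apply_eq_of_proximal [SMul T X] [CompactSpace X] {x y : X} (h : Proximal T x y) :
    ∃ r ∈ Ellis T X, r x = r y := by
  obtain ⟨t₀, -⟩ := h 1 one_pos
  obtain ⟨r, hr, hmin⟩ := isClosed_closure.isCompact.exists_isMinOn ⟨_, smul_mem_ellis t₀⟩
    (f := fun h : X → X => dist (h x) (h y)) (by fun_prop)
  refine ⟨r, hr, dist_le_zero.1 (le_of_forall_pos_le_add fun ε hε => ?_)⟩
  obtain ⟨t, ht⟩ := h ε hε
  have hrt : dist (r x) (r y) ≤ dist (t • x) (t • y) := isMinOn_iff.1 hmin _ (smul_mem_ellis t)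
  linarith

lemma Proximal.map_eq_of_uniformEquicontinuous [Group T] [MulAction T X]
    {Y : Type*} [UniformSpace Y] [T0Space Y] [MulAction T Y] {π : X → Y}
    (hπ : UniformContinuous π) (hY : UniformEquicontinuous fun t : T => fun y : Y => t • y)
    (hπe : ∀ (t : T) (x : X), π (t • x) = t • π x) {x y : X} (h : Proximal T x y) :
    π x = π y := by
  refine eq_of_uniformity fun hW => ?_
  obtain ⟨ε, hε, hball⟩ := Metric.mem_uniformity_dist.mp (hπ (hY _ hW))
  obtain ⟨t, ht⟩ := h ε hε
  simpa [hπe] using hball ht t⁻¹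

end Proximal

def IsClosedLeftIdealIn {X : Type*} [TopologicalSpace X] (E L : Set (X → X)) : Prop :=
  IsClosed L ∧ L.Nonempty ∧ L ⊆ E ∧ ∀ f ∈ E, ∀ g ∈ L, f ∘ g ∈ L

section MinimalIdempotent

variable {T X : Type*} [Monoid T] [TopologicalSpace X] [CompactSpace X] [MulAction T X]

lemma exists_minimal_isClosedLeftIdealIn_ellis (hX : ∀ t : T, Continuous fun x : X => t • x) :
    ∃ L, Minimal (IsClosedLeftIdealIn (Ellis T X)) L := by
  have hE : IsClosedLeftIdealIn (Ellis T X) (Ellis T X) :=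
    ⟨isClosed_closure, ⟨_, smul_mem_ellis (1 : T)⟩, subset_rfl,
      fun f hf g hg => comp_mem_ellis hX hf hg⟩
  suffices hchains : ∀ c ⊆ {L | IsClosedLeftIdealIn (Ellis T X) L}, IsChain (· ⊆ ·) c →
      c.Nonempty → ∃ lb ∈ {L | IsClosedLeftIdealIn (Ellis T X) L}, ∀ L ∈ c, lb ⊆ L by
    obtain ⟨L, -, hL⟩ := zorn_superset_nonempty _ hchains _ hE
    exact ⟨L, hL⟩
  intro c hc hchain hne
  refine ⟨⋂₀ c, ⟨isClosed_sInter fun L hL => (hc hL).1, ?_, ?_, ?_⟩,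
    fun L hL => sInter_subset_of_mem hL⟩
  · have := hne.to_subtype
    exact IsCompact.nonempty_sInter_of_directed_nonempty_isCompact_isClosed
      (IsChain.directedOn (r := fun a b : Set (X → X) => a ⊇ b) hchain.symm)
      (fun L hL => (hc hL).2.1) (fun L hL => (hc hL).1.isCompact) fun L hL => (hc hL).1
  · obtain ⟨L, hL⟩ := hne
    exact (sInter_subset_of_mem hL).trans (hc hL).2.2.1
  · exact fun f hf g hg => mem_sInter.2 fun L hL => (hc hL).2.2.2 f hf g (hg L hL)

lemma exists_comp_comp_eq_of_minimal [T2Space X] (hX : ∀ t : T, Continuous fun x : X => t • x)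
    {L : Set (X → X)} (hL : Minimal (IsClosedLeftIdealIn (Ellis T X)) L) {l r : X → X} (hl : l ∈ L)
    (hr : r ∈ Ellis T X) : ∃ h ∈ Ellis T X, h ∘ r ∘ l = l := by
  obtain ⟨-, -, hLE, hLideal⟩ := hL.prop
  have hrl : r ∘ l ∈ L := hLideal r hr l hl
  have hgen : (· ∘ (r ∘ l)) '' Ellis T X = L := by
    refine hL.eq_of_subset ⟨?_, ⟨_, mem_image_of_mem _ (smul_mem_ellis (1 : T))⟩, ?_, ?_⟩
      (image_subset_iff.2 fun h hh => hLideal h hh _ hrl)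
    · exact (isClosed_closure.isCompact.image
        (continuous_pi fun x => continuous_apply (r (l x)))).isClosed
    · rintro _ ⟨h, hh, rfl⟩
      exact hLE (hLideal h hh _ hrl)
    · rintro f hf _ ⟨h, hh, rfl⟩
      exact ⟨f ∘ h, comp_mem_ellis hX hf hh, rfl⟩
  rw [← hgen] at hl
  exact hl

lemma IsMinIdem.exists_comp_comp_eq [T2Space X] (hX : ∀ t : T, Continuous fun x : X => t • x)
    {e : X → X} (he : IsMinIdem (Ellis T X) e) {r : X → X} (hr : r ∈ Ellis T X) :
    ∃ h ∈ Ellis T X, h ∘ r ∘ e = e := by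
  obtain ⟨L, hL⟩ := exists_minimal_isClosedLeftIdealIn_ellis hX
  obtain ⟨l, hl⟩ := hL.prop.2.1
  -- nonempty, as it contains every element of a minimal closed left ideal
  let I := {g ∈ Ellis T X | ∀ r ∈ Ellis T X, ∃ h ∈ Ellis T X, h ∘ r ∘ g = g}
  have hI : IsIdealIn (Ellis T X) I := by
    refine ⟨fun g hg => hg.1, ⟨l, hL.prop.2.2.1 hl,
      fun r hr => exists_comp_comp_eq_of_minimal hX hL hl hr⟩, fun f hf g ⟨hg, hgr⟩ => ⟨?_, ?_⟩⟩
    · refine ⟨comp_mem_ellis hX hf hg, fun r hr => ?_⟩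
      obtain ⟨h, hh, hhg⟩ := hgr (r ∘ f) (comp_mem_ellis hX hr hf)
      exact ⟨f ∘ h, comp_mem_ellis hX hf hh, congrArg (f ∘ ·) hhg⟩
    · refine ⟨comp_mem_ellis hX hg hf, fun r hr => ?_⟩
      obtain ⟨h, hh, hhg⟩ := hgr r hr
      exact ⟨h, hh, congrArg (· ∘ f) hhg⟩
  exact (he.2.2 I hI).2 r hr

end MinimalIdempotent

lemma IsMinIdem.eq_of_proximal {T X : Type*} [Monoid T] [MetricSpace X] [CompactSpace X]
    [MulAction T X] (hX : ∀ t : T, Continuous fun x : X => t • x) {e : X → X}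
    (he : IsMinIdem (Ellis T X) e) {p q : X} (hpq : Proximal T p q) (hp : e p = p)
    (hq : e q = q) : p = q := by
  obtain ⟨r, hr, hrpq⟩ := exists_apply_eq_of_proximal hpq
  obtain ⟨h, -, hhre⟩ := he.exists_comp_comp_eq hX hr
  have hhrep : h (r (e p)) = e p := congrFun hhre p
  have hhreq : h (r (e q)) = e q := congrFun hhre q
  calc p = h (r (e p)) := by rw [hhrep, hp]
    _ = h (r (e q)) := by rw [hp, hq, hrpq]
    _ = q := by rw [hhreq, hq]

section FactorMap

variable {X Y : Type*} {π : X → Y} (hπ : Surjective π) {f g : X → X} {F G : Y → Y}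

noncomputable def factorMap (f : X → X) : Y → Y := π ∘ f ∘ surjInv hπ

lemma factorMap_eq_of_semiconj (h : Semiconj π f F) : factorMap hπ f = F :=
  funext fun y => by simp only [factorMap, comp_apply, h (surjInv hπ y), surjInv_eq hπ]

lemma factorMap_comp_of_semiconj (hf : Semiconj π f F) (hg : Semiconj π g G) :
    factorMap hπ (f ∘ g) = factorMap hπ f ∘ factorMap hπ g := by
  rw [factorMap_eq_of_semiconj hπ hf, factorMap_eq_of_semiconj hπ hg,
    factorMap_eq_of_semiconj hπ (hf.comp_right hg)]

end FactorMap

section Factor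

variable {T X Y : Type*} [TopologicalSpace X] [SMul T X] [TopologicalSpace Y] [SMul T Y]

/-- The Ellis semigroup of the product flow `X × Y`, with its elements seen as pairs. -/
def jointEllis (T X Y : Type*) [TopologicalSpace X] [TopologicalSpace Y] [SMul T X] [SMul T Y] :
    Set ((X → X) × (Y → Y)) :=
  closure (range fun t : T => ((fun x : X => t • x), (fun y : Y => t • y)))

lemma jointEllis_subset_prod : jointEllis T X Y ⊆ Ellis T X ×ˢ Ellis T Y :=
  (closure_mono (range_subset_iff.2 fun t => mk_mem_prod (mem_range_self t) (mem_range_self t))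
    ).trans closure_prod_eq.subset

lemma image_fst_jointEllis [CompactSpace X] [T2Space X] [CompactSpace Y] :
    Prod.fst '' jointEllis T X Y = Ellis T X := by
  rw [jointEllis, image_closure_of_isCompact isClosed_closure.isCompact
    continuous_fst.continuousOn, ← range_comp]
  rfl

lemma image_snd_jointEllis [CompactSpace X] [CompactSpace Y] [T2Space Y] :
    Prod.snd '' jointEllis T X Y = Ellis T Y := by
  rw [jointEllis, image_closure_of_isCompact isClosed_closure.isCompact
    continuous_snd.continuousOn, ← range_comp]
  rfl

variable [T2Space Y] {π : X → Y}

lemma semiconj_of_mem_jointEllis (hπc : Continuous π)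
    (hπe : ∀ (t : T) (x : X), π (t • x) = t • π x) {p : (X → X) × (Y → Y)}
    (hp : p ∈ jointEllis T X Y) : Semiconj π p.1 p.2 := by
  have hclosed : IsClosed {p : (X → X) × (Y → Y) | Semiconj π p.1 p.2} := by
    simp only [Semiconj, ofPred_forall]
    exact isClosed_iInter fun x => isClosed_eq (by fun_prop) (by fun_prop)
  refine closure_minimal ?_ hclosed hp
  rintro _ ⟨t, rfl⟩
  exact hπe t

lemma exists_semiconj_of_mem_ellis [CompactSpace X] [T2Space X] [CompactSpace Y]
    (hπc : Continuous π) (hπe : ∀ (t : T) (x : X), π (t • x) = t • π x) {f : X → X}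
    (hf : f ∈ Ellis T X) : ∃ g ∈ Ellis T Y, Semiconj π f g := by
  obtain ⟨p, hp, rfl⟩ : f ∈ Prod.fst '' jointEllis T X Y := by rwa [image_fst_jointEllis]
  exact ⟨p.2, (jointEllis_subset_prod hp).2, semiconj_of_mem_jointEllis hπc hπe hp⟩

lemma exists_semiconj_lift_of_mem_ellis [CompactSpace X] [CompactSpace Y]
    (hπc : Continuous π) (hπe : ∀ (t : T) (x : X), π (t • x) = t • π x) {g : Y → Y}
    (hg : g ∈ Ellis T Y) : ∃ f ∈ Ellis T X, Semiconj π f g := by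
  obtain ⟨p, hp, rfl⟩ : g ∈ Prod.snd '' jointEllis T X Y := by rwa [image_snd_jointEllis]
  exact ⟨p.1, (jointEllis_subset_prod hp).1, semiconj_of_mem_jointEllis hπc hπe hp⟩

lemma semiconj_factorMap_of_mem_ellis [CompactSpace X] [T2Space X] [CompactSpace Y]
    (hπs : Surjective π) (hπc : Continuous π) (hπe : ∀ (t : T) (x : X), π (t • x) = t • π x)
    {f : X → X} (hf : f ∈ Ellis T X) : Semiconj π f (factorMap hπs f) := by
  obtain ⟨g, -, hfg⟩ := exists_semiconj_of_mem_ellis hπc hπe hf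
  rwa [factorMap_eq_of_semiconj hπs hfg]

lemma factorMap_mem_ellis [CompactSpace X] [T2Space X] [CompactSpace Y]
    (hπs : Surjective π) (hπc : Continuous π) (hπe : ∀ (t : T) (x : X), π (t • x) = t • π x)
    {f : X → X} (hf : f ∈ Ellis T X) : factorMap hπs f ∈ Ellis T Y := by
  obtain ⟨g, hg, hfg⟩ := exists_semiconj_of_mem_ellis hπc hπe hf
  rwa [factorMap_eq_of_semiconj hπs hfg]

end Factor

theorem stmt17_general {T : Type*} [Group T]
    {X : Type*} [MetricSpace X] [CompactSpace X] [MulAction T X]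
    {Y : Type*} [UniformSpace Y] [CompactSpace Y] [T2Space Y] [MulAction T Y]
    (hX : ∀ t : T, Continuous fun x : X => t • x)
    (hYeq : Equicontinuous fun t : T => fun y : Y => t • y)
    (π : X → Y) (hπc : Continuous π) (hπs : Function.Surjective π)
    (hπe : ∀ (t : T) (x : X), π (t • x) = t • π x)
    (hfib : ∀ x y : X, π x = π y → Proximal T x y)
    (e : X → X) (he : IsMinIdem (Ellis T X) e) :
    ∃ Φ : (X → X) → (Y → Y),
      (∀ f ∈ Ellis T X, π ∘ f = Φ f ∘ π) ∧
      Set.BijOn Φ {g : X → X | ∃ h ∈ Ellis T X, g = e ∘ h ∘ e} (Ellis T Y) ∧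
      (∀ f ∈ {g : X → X | ∃ h ∈ Ellis T X, g = e ∘ h ∘ e},
       ∀ g' ∈ {g : X → X | ∃ h ∈ Ellis T X, g = e ∘ h ∘ e},
         Φ (f ∘ g') = Φ f ∘ Φ g') := by
  have heE : e ∈ Ellis T X := he.1
  have hee : e ∘ e = e := he.2.1
  have hsemi (f : X → X) (hf : f ∈ Ellis T X) : Semiconj π f (factorMap hπs f) :=
    semiconj_factorMap_of_mem_ellis hπs hπc hπe hf
  have hmul (f : X → X) (hf : f ∈ Ellis T X) (g : X → X) (hg : g ∈ Ellis T X) :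
      factorMap hπs (f ∘ g) = factorMap hπs f ∘ factorMap hπs g :=
    factorMap_comp_of_semiconj hπs (hsemi f hf) (hsemi g hg)
  have hπ_idem : Semiconj π e id := fun x =>
    ((proximal_of_apply_eq heE (congrFun hee x).symm).map_eq_of_uniformEquicontinuous
      (CompactSpace.uniformContinuous_of_continuous hπc)
      (CompactSpace.uniformEquicontinuous_of_equicontinuous hYeq) hπe).symm
  have hSE : ∀ f ∈ {g : X → X | ∃ h ∈ Ellis T X, g = e ∘ h ∘ e}, f ∈ Ellis T X := by
    rintro _ ⟨h, hh, rfl⟩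
    exact comp_mem_ellis hX heE (comp_mem_ellis hX hh heE)
  have hSe : ∀ f ∈ {g : X → X | ∃ h ∈ Ellis T X, g = e ∘ h ∘ e}, e ∘ f = f := by
    rintro _ ⟨h, -, rfl⟩
    rw [← comp_assoc, hee]
  refine ⟨factorMap hπs, fun f hf => (hsemi f hf).comp_eq,
    ⟨fun f hf => factorMap_mem_ellis hπs hπc hπe (hSE f hf), ?_, ?_⟩,
    fun f hf g hg => hmul f (hSE f hf) g (hSE g hg)⟩
  · intro f₁ hf₁ f₂ hf₂ hΦ
    funext x
    refine he.eq_of_proximal hX (hfib _ _ ?_) (congrFun (hSe f₁ hf₁) x) (congrFun (hSe f₂ hf₂) x)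
    rw [hsemi f₁ (hSE f₁ hf₁) x, hsemi f₂ (hSE f₂ hf₂) x, hΦ]
  · intro g hg
    obtain ⟨f, hf, hfg⟩ := exists_semiconj_lift_of_mem_ellis hπc hπe hg
    refine ⟨e ∘ f ∘ e, ⟨f, hf, rfl⟩, ?_⟩
    rw [hmul e heE _ (comp_mem_ellis hX hf heE), hmul f hf e heE,
      factorMap_eq_of_semiconj hπs hπ_idem, factorMap_eq_of_semiconj hπs hfg]
    rfl

/-- Let `(X,T)` be minimal with maximal equicontinuous factor `π : X → Y`. If every
pair of points in the same fibre of `π` is proximal (coincidence rank 1), then the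
induced map `π_*` restricted to the structure group `eE(X)e` is injective, hence a
group isomorphism onto `E(Y)`. -/
theorem stmt17 {T : Type*} [Group T]
    {X : Type*} [MetricSpace X] [CompactSpace X] [MulAction T X]
    {Y : Type*} [UniformSpace Y] [CompactSpace Y] [T2Space Y] [MulAction T Y]
    (hX : ∀ t : T, Continuous fun x : X => t • x)
    (hmin : ∀ x : X, Dense (MulAction.orbit T x))
    (hYc : ∀ t : T, Continuous fun y : Y => t • y)
    (hYeq : Equicontinuous fun t : T => fun y : Y => t • y)
    (π : X → Y) (hπc : Continuous π) (hπs : Function.Surjective π)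
    (hπe : ∀ (t : T) (x : X), π (t • x) = t • π x)
    (hfib : ∀ x y : X, π x = π y → Proximal T x y)
    (e : X → X) (he : IsMinIdem (Ellis T X) e) :
    ∃ Φ : (X → X) → (Y → Y),
      (∀ f ∈ Ellis T X, π ∘ f = Φ f ∘ π) ∧
      Set.BijOn Φ {g : X → X | ∃ h ∈ Ellis T X, g = e ∘ h ∘ e} (Ellis T Y) ∧
      (∀ f ∈ {g : X → X | ∃ h ∈ Ellis T X, g = e ∘ h ∘ e},
       ∀ g' ∈ {g : X → X | ∃ h ∈ Ellis T X, g = e ∘ h ∘ e},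
         Φ (f ∘ g') = Φ f ∘ Φ g') :=
  stmt17_general hX hYeq π hπc hπs hπe hfib e he
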